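/- Let G be an induced-minor-minimal non-2-cograph such that both G and its complement are induced-minor-minimal non-2-cographs. If G has a path of length greater than 3 all of whose internal vertices have degree two in G, then G is isomorphic to the 5-cycle C_5. -/

import Mathlib

/-- A graph is 2-connected if it has at least 3 vertices, is connected,
and remains connected after deleting any single vertex. -/
def TwoConnected {V : Type} [Fintype V] (G : SimpleGraph V) : Prop :=
  3 ≤ Fintype.card V ∧ G.Connected ∧
    ∀ v : V, (G.induce ({v}ᶜ : Set V)).Connected

/-- A graph is a 2-cograph if it has no induced subgraph `H` such that
both `H` and its complement are 2-connected. -/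
def IsTwoCograph {V : Type} [Fintype V] (G : SimpleGraph V) : Prop :=
  ∀ S : Finset V, ¬ (TwoConnected (G.induce (S : Set V)) ∧
      TwoConnected ((G.induce (S : Set V))ᶜ))

/-- `H` is an induced minor of `G`: witnessed by pairwise disjoint nonempty
connected branch sets, with adjacency in `H` iff there is an edge between
the corresponding branch sets. -/
def IsInducedMinor {V W : Type} (G : SimpleGraph V) (H : SimpleGraph W) : Prop :=
  ∃ B : W → Set V,
    (∀ w, (B w).Nonempty) ∧
    (∀ w, (G.induce (B w)).Connected) ∧
    (Pairwise fun w w' => Disjoint (B w) (B w')) ∧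
    ∀ w w', w ≠ w' → (H.Adj w w' ↔ ∃ a ∈ B w, ∃ b ∈ B w', G.Adj a b)

/-- `G` is an induced-minor-minimal non-2-cograph: `G` is not a 2-cograph but
every proper induced minor of `G` (one with fewer vertices) is a 2-cograph. -/
def IsIMMNon2Cograph {V : Type} [Fintype V] (G : SimpleGraph V) : Prop :=
  ¬ IsTwoCograph G ∧
    ∀ (W : Type) [Fintype W], ∀ H : SimpleGraph W,
      IsInducedMinor G H → Fintype.card W < Fintype.card V → IsTwoCograph H

/-!
A minimal non-2-cograph is its own witness, so `G` is 2-connected, while no proper induced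
minor `H` has both `H` and `Hᶜ` 2-connected. Let `a₀ a₁ a₂ a₃ a₄` start the path, so that
`a₁, a₂, a₃` have degree two. If `G` had a sixth vertex, one of two proper induced minors would
be such an `H`:
* if `a₀` (or symmetrically `a₄`) is adjacent to every vertex off `a₀ a₁ a₂ a₃`, delete a vertex
  `o ≠ a₄` that does not disconnect `G - {a₀, a₁, a₂, a₃}`; then `a₀` is a hub of what is left of
  `G` and `a₂` a hub of its complement;
* otherwise suppress `a₂`; in the complement `a₁` is adjacent to all but `a₀` and `a₃`, and
  non-neighbours of `a₀` and `a₄` link these back.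
So `G` has five vertices, 2-connectivity forces the edge `a₀a₄`, and `G` is the cycle
`a₀ a₁ a₂ a₃ a₄`.
-/

open SimpleGraph

namespace SimpleGraph

variable {V W : Type} {G G' : SimpleGraph V}

lemma compl_induce (G : SimpleGraph V) (s : Set V) : (G.induce s)ᶜ = Gᶜ.induce s := by
  ext a b
  simp [Subtype.ext_iff]

lemma compl_sup_edge_adj {x z u v : V} :
    (G ⊔ edge x z)ᶜ.Adj u v ↔ u ≠ v ∧ ¬ G.Adj u v ∧ ¬ (u = x ∧ v = z ∨ u = z ∧ v = x) := by
  simp only [compl_adj, sup_adj, edge_adj]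
  tauto

lemma adj_iff_of_degree_eq_two {x a b : V} [Fintype (G.neighborSet x)]
    (hdeg : G.degree x = 2) (ha : G.Adj x a) (hb : G.Adj x b) (hab : a ≠ b) (w : V) :
    G.Adj x w ↔ w = a ∨ w = b := by
  classical
  have hsub : ({a, b} : Finset V) ⊆ G.neighborFinset x := by
    simp [Finset.insert_subset_iff, ha, hb]
  have heq := Finset.eq_of_subset_of_card_le hsub (by
    rw [card_neighborFinset_eq_degree, hdeg, Finset.card_pair hab])
  rw [← mem_neighborFinset, ← heq]
  simp

lemma Preconnected.of_surjective_of_adj {H : SimpleGraph W} (hG : G.Preconnected) (f : V → W)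
    (hf : f.Surjective) (hadj : ∀ a b, G.Adj a b → f a = f b ∨ H.Adj (f a) (f b)) :
    H.Preconnected := by
  have key : ∀ {a b : V}, G.Walk a b → H.Reachable (f a) (f b) := by
    intro a b p
    induction p with
    | nil => rfl
    | cons h _ ih =>
      rcases hadj _ _ h with he | he
      · exact he ▸ ih
      · exact he.reachable.trans ih
  intro u v
  obtain ⟨a, rfl⟩ := hf u
  obtain ⟨b, rfl⟩ := hf v
  exact key (hG a b).some

lemma connected_induce_induce_compl_singleton_iff {s : Set V} (v : s) :
    ((G.induce s).induce {v}ᶜ).Connected ↔ (G.induce (s \ {v.1})).Connected :=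
  Iso.connected_iff
    { toFun := fun x => ⟨x.1.1, x.1.2, fun h => x.2 (Subtype.ext h)⟩
      invFun := fun x => ⟨⟨x.1, x.2.1⟩, fun h => x.2.2 (congrArg Subtype.val h)⟩
      left_inv := fun _ => rfl
      right_inv := fun _ => rfl
      map_rel_iff' := Iff.rfl }

lemma connected_induce_diff_singleton {s : Set V} {y c : V} (hs : (G.induce s).Connected)
    (hle : G ≤ G') (hc : c ∈ s) (hcy : c ≠ y) (hy : ∀ w ∈ s, G.Adj y w → w = c ∨ G'.Adj c w) :
    (G'.induce (s \ {y})).Connected := by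
  classical
  -- walks through `y` are rerouted through `c`
  let f : s → ↥(s \ {y}) := fun a => if h : a.1 = y then ⟨c, hc, hcy⟩ else ⟨a.1, a.2, h⟩
  refine (connected_iff _).2 ⟨hs.preconnected.of_surjective_of_adj f ?_ ?_, ⟨⟨c, hc, hcy⟩⟩⟩
  · intro b
    have hb : b.1 ≠ y := b.2.2
    exact ⟨⟨b.1, b.2.1⟩, by simp [f, hb]⟩
  · rintro ⟨a, ha⟩ ⟨b, hb⟩ hab
    simp only [comap_adj, Function.Embedding.coe_subtype] at hab
    by_cases hay : a = y <;> by_cases hby : b = y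
    · exact absurd (hay.trans hby.symm) hab.ne
    · subst hay
      rcases hy b hb hab with rfl | h
      · left; simp [f, hby]
      · right; simpa [f, hby] using h
    · subst hby
      rcases hy a ha hab.symm with rfl | h
      · left; simp [f, hay]
      · right; simpa [f, hay] using h.symm
    · right; simpa [f, hay, hby] using hle hab

lemma Connected.exists_ne_connected_induce_compl_singleton [Finite V] [Nontrivial V]
    (h : G.Connected) (r : V) : ∃ v ≠ r, (G.induce {v}ᶜ).Connected := by
  obtain ⟨T, hTG, hT⟩ := h.exists_isTree_le
  have := Fintype.ofFinite V
  classical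
  obtain ⟨u, w, huw, hu, hw⟩ := hT.exists_ne_and_degree_eq_one
  have leaf : ∀ v, T.degree v = 1 → (G.induce {v}ᶜ).Connected := fun v hv =>
    (hT.connected.induce_compl_singleton_of_degree_eq_one hv).mono (by tauto)
  by_cases hur : u = r
  · exact ⟨w, hur ▸ huw.symm, leaf w hw⟩
  · exact ⟨u, hur, leaf u hu⟩

lemma exists_ne_connected_induce_diff_singleton {s : Set V} (hs : s.Finite)
    (hconn : (G.induce s).Connected) {r x : V} (hr : r ∈ s) (hx : x ∈ s) (hxr : x ≠ r) :
    ∃ o ∈ s, o ≠ r ∧ (G.induce (s \ {o})).Connected := by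
  have : Finite s := hs
  have : Nontrivial s := ⟨⟨r, hr⟩, ⟨x, hx⟩, fun h => hxr (congrArg Subtype.val h).symm⟩
  obtain ⟨o, hor, ho⟩ := hconn.exists_ne_connected_induce_compl_singleton ⟨r, hr⟩
  exact ⟨o, o.2, fun h => hor (Subtype.ext h), (connected_induce_induce_compl_singleton_iff o).1 ho⟩

lemma connected_induce_of_forall_walk {s : Set V} {r : V} (hr : r ∈ s)
    (h : ∀ v ∈ s, v ≠ r → ∃ p : G.Walk v r, ∀ w ∈ p.support, w ∈ s) :
    (G.induce s).Connected := by
  refine induce_connected_of_patches r hr fun {v} hv => ?_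
  by_cases hvr : v = r
  · subst hvr
    exact ⟨{v}, by simpa using hv, rfl, rfl, Reachable.refl _⟩
  obtain ⟨p, hp⟩ := h v hv hvr
  exact ⟨{w | w ∈ p.support}, hp, p.end_mem_support, p.start_mem_support,
    p.connected_induce_support.preconnected _ _⟩

end SimpleGraph

section InducedMinor

variable {V : Type} {G : SimpleGraph V}

lemma isInducedMinor_induce (G : SimpleGraph V) (s : Set V) : IsInducedMinor G (G.induce s) :=
  ⟨fun w => {w.1}, fun w => Set.singleton_nonempty _, fun w => by simp [induce_singleton_eq_top],
    fun w w' h => by simpa [Subtype.ext_iff] using h, fun w w' _ => by simp⟩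

/-- Suppressing the degree-two vertex `y` (contracting the edge `xy`) is modelled as deleting `y`
and adding the edge `xz`; the branch set of `x` is `{x, y}`. -/
lemma isInducedMinor_suppress {x y z : V} (hxz : x ≠ z) (hy : ∀ w, G.Adj y w ↔ w = x ∨ w = z) :
    IsInducedMinor G ((G ⊔ edge x z).induce {y}ᶜ) := by
  classical
  have hxy : G.Adj x y := ((hy x).2 (Or.inl rfl)).symm
  refine ⟨fun w => if w.1 = x then {x, y} else {w.1}, fun w => ?_, fun w => ?_, ?_, ?_⟩
  · dsimp only
    split_ifs <;> simp
  · dsimp only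
    by_cases hw : w.1 = x
    · rw [if_pos hw]
      exact induce_pair_connected_of_adj hxy
    · rw [if_neg hw]
      simp [induce_singleton_eq_top]
  · intro w w' hww'
    have : w.1 ≠ w'.1 := fun h => hww' (Subtype.ext h)
    have hw : w.1 ≠ y := w.2
    have hw' : w'.1 ≠ y := w'.2
    dsimp only
    split_ifs <;> simp only [Set.disjoint_left, Set.mem_insert_iff, Set.mem_singleton_iff] <;>
      grind
  · rintro ⟨w, hw⟩ ⟨w', hw'⟩ hww'
    have hne : w ≠ w' := fun h => hww' (Subtype.ext h)
    simp only [Set.mem_compl_iff, Set.mem_singleton_iff] at hw hw'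
    simp only [comap_adj, Function.Embedding.coe_subtype, sup_adj, edge_adj]
    split_ifs with h h' h'
    · exact absurd (h.trans h'.symm) hne
    · subst h
      simp only [Set.mem_insert_iff, Set.mem_singleton_iff, exists_eq_or_imp, exists_eq_left, hy]
      grind
    · subst h'
      simp only [Set.mem_insert_iff, Set.mem_singleton_iff, exists_eq_or_imp, exists_eq_left,
        G.adj_comm _ y, hy]
      grind
    · simp only [Set.mem_singleton_iff, exists_eq_left]
      grind

end InducedMinor

section TwoConnected

variable {V W : Type} {G : SimpleGraph V}

lemma two_lt_ncard_compl_singleton [Fintype V] (hcard : 3 < Fintype.card V) (y : V) :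
    2 < ({y}ᶜ : Set V).ncard := by
  rw [Set.ncard_compl, Set.ncard_singleton, Nat.card_eq_fintype_card]
  omega

lemma TwoConnected.of_iso [Fintype V] [Fintype W] {G' : SimpleGraph W} (e : G ≃g G')
    (h : TwoConnected G) : TwoConnected G' := by
  obtain ⟨hcard, hconn, hdel⟩ := h
  refine ⟨Fintype.card_congr e.toEquiv ▸ hcard, e.connected_iff.1 hconn, fun w => ?_⟩
  have hbij : Set.BijOn e {e.symm w}ᶜ {w}ᶜ := by
    convert e.injective.injOn.bijOn_image
    rw [Set.image_compl_eq e.bijective, Set.image_singleton, e.apply_symm_apply]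
  exact (e.induce hbij).connected_iff.1 (hdel _)

-- Stated for any `s = univ`, so that they apply whatever `Fintype` instance `↥s` carries.
lemma TwoConnected.induce_of_eq_univ [Fintype V] (h : TwoConnected G) {s : Set V} [Fintype s]
    (hs : s = Set.univ) : TwoConnected (G.induce s) := by
  subst hs
  exact h.of_iso (induceUnivIso G).symm

lemma TwoConnected.of_induce_of_eq_univ [Fintype V] {s : Set V} [Fintype s]
    (h : TwoConnected (G.induce s)) (hs : s = Set.univ) : TwoConnected G := by
  subst hs
  exact h.of_iso (induceUnivIso G)

lemma twoConnected_induce_of_connected_diff {s : Set V} [Fintype s] (hcard : 2 < s.ncard)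
    (hdel : ∀ x ∈ s, (G.induce (s \ {x})).Connected) : TwoConnected (G.induce s) := by
  obtain ⟨a, b, c, ha, hb, hc, hab, hac, hbc⟩ := (Set.two_lt_ncard_iff s.toFinite).1 hcard
  have hconn : (G.induce (s \ {a} ∪ s \ {b})).Connected :=
    induce_union_connected (hdel a ha).preconnected (hdel b hb).preconnected
      ⟨c, ⟨hc, hac.symm⟩, hc, hbc.symm⟩
  rw [← Set.sdiff_inter, Set.singleton_inter_eq_empty.2 (by simpa using hab), Set.sdiff_empty]
    at hconn
  exact ⟨by rwa [← Nat.card_eq_fintype_card], hconn,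
    fun v => (connected_induce_induce_compl_singleton_iff v).2 (hdel v v.2)⟩

lemma TwoConnected.exists_adj_ne [Fintype V] (h : TwoConnected G) {v x : V} (hvx : v ≠ x) :
    ∃ w ≠ x, G.Adj v w := by
  obtain ⟨hcard, -, hdel⟩ := h
  have : Nontrivial ({x}ᶜ : Set V) := by
    rw [Set.nontrivial_coe_sort, ← Set.one_lt_ncard_iff_nontrivial, Set.ncard_compl,
      Set.ncard_singleton, Nat.card_eq_fintype_card]
    omega
  obtain ⟨⟨w, hw⟩, hvw⟩ := (hdel x).preconnected.exists_adj_of_nontrivial ⟨v, hvx⟩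
  exact ⟨w, hw, hvw⟩

lemma TwoConnected.suppress [Fintype V] [DecidableEq V] {x y z : V} (hG : TwoConnected G)
    (hxz : x ≠ z) (hy : ∀ w, G.Adj y w ↔ w = x ∨ w = z) (hcard : 3 < Fintype.card V) :
    TwoConnected ((G ⊔ edge x z).induce {y}ᶜ) := by
  have hxy : x ≠ y := (G.ne_of_adj ((hy x).2 (Or.inl rfl))).symm
  have hzy : z ≠ y := (G.ne_of_adj ((hy z).2 (Or.inr rfl))).symm
  have hxz' : (G ⊔ edge x z).Adj x z := Or.inr ((edge_adj x z x z).2 ⟨Or.inl ⟨rfl, rfl⟩, hxz⟩)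
  refine twoConnected_induce_of_connected_diff (two_lt_ncard_compl_singleton hcard y)
    fun v _ => ?_
  rw [show ({y}ᶜ : Set V) \ {v} = {v}ᶜ \ {y} by ext; simp [and_comm]]
  by_cases hvx : v = x
  · subst hvx
    refine connected_induce_diff_singleton (hG.2.2 v) le_sup_left hxz.symm hzy fun w hw hyw => ?_
    rcases (hy w).1 hyw with rfl | rfl
    exacts [absurd rfl hw, Or.inl rfl]
  · refine connected_induce_diff_singleton (hG.2.2 v) le_sup_left (Ne.symm hvx) hxy
      fun w _ hw => ?_
    rcases (hy w).1 hw with rfl | rfl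
    exacts [Or.inl rfl, Or.inr hxz']

lemma IsTwoCograph.not_twoConnected_and_compl [Fintype V] (h : IsTwoCograph G) :
    ¬ (TwoConnected G ∧ TwoConnected Gᶜ) := fun ⟨h₁, h₂⟩ =>
  h Finset.univ ⟨h₁.induce_of_eq_univ Finset.coe_univ, by
    rw [compl_induce]
    exact h₂.induce_of_eq_univ Finset.coe_univ⟩

lemma IsIMMNon2Cograph.twoConnected [Fintype V] (hG : IsIMMNon2Cograph G) : TwoConnected G := by
  classical
  obtain ⟨hnot, hmin⟩ := hG
  simp only [IsTwoCograph, not_forall, not_not] at hnot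
  obtain ⟨S, hS⟩ := hnot
  obtain rfl : S = Finset.univ := by
    by_contra hS'
    refine (hmin _ _ (isInducedMinor_induce G S) ?_).not_twoConnected_and_compl hS
    simpa using Finset.card_lt_card (Finset.ssubset_univ_iff.2 hS')
  exact hS.1.of_induce_of_eq_univ Finset.coe_univ

end TwoConnected

section BarePaths

variable {V : Type} {G : SimpleGraph V}

lemma exists_notMem_of_length_lt_card [Fintype V] [DecidableEq V] (l : List V)
    (hl : l.length < Fintype.card V) : ∃ m, m ∉ l := by
  obtain ⟨m, -, hm⟩ := Finset.exists_mem_notMem_of_card_lt_card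
    (s := l.toFinset) (t := Finset.univ) ((List.toFinset_card_le _).trans_lt (by simpa using hl))
  exact ⟨m, by simpa using hm⟩

structure BarePath (G : SimpleGraph V) (a₀ a₁ a₂ a₃ a₄ : V) : Prop where
  nodup : [a₀, a₁, a₂, a₃, a₄].Nodup
  adj₁ : ∀ w, G.Adj a₁ w ↔ w = a₀ ∨ w = a₂
  adj₂ : ∀ w, G.Adj a₂ w ↔ w = a₁ ∨ w = a₃
  adj₃ : ∀ w, G.Adj a₃ w ↔ w = a₂ ∨ w = a₄

namespace BarePath

variable {a₀ a₁ a₂ a₃ a₄ : V}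

lemma ne (h : BarePath G a₀ a₁ a₂ a₃ a₄) :
    a₀ ≠ a₁ ∧ a₀ ≠ a₂ ∧ a₀ ≠ a₃ ∧ a₀ ≠ a₄ ∧ a₁ ≠ a₂ ∧ a₁ ≠ a₃ ∧ a₁ ≠ a₄ ∧
      a₂ ≠ a₃ ∧ a₂ ≠ a₄ ∧ a₃ ≠ a₄ := by
  have := h.nodup
  simp_all

lemma symm (h : BarePath G a₀ a₁ a₂ a₃ a₄) : BarePath G a₄ a₃ a₂ a₁ a₀ where
  nodup := by have := h.nodup; simp_all [eq_comm]
  adj₁ := fun w => (h.adj₃ w).trans or_comm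
  adj₂ := fun w => (h.adj₂ w).trans or_comm
  adj₃ := fun w => (h.adj₁ w).trans or_comm

lemma connected_induce_compl (h : BarePath G a₀ a₁ a₂ a₃ a₄) [Fintype V] (hG : TwoConnected G) :
    (G.induce ({a₀, a₁, a₂, a₃} : Set V)ᶜ).Connected := by
  obtain ⟨h01, h02, h03, h04, h12, h13, h14, h23, h24, h34⟩ := h.ne
  have h₁ := connected_induce_diff_singleton (hG.2.2 a₀) le_rfl (c := a₂) (y := a₁)
    (by simpa using h02.symm) h12.symm (by grind [h.adj₁])
  have h₂ := connected_induce_diff_singleton h₁ le_rfl (c := a₃) (y := a₂)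
    (by simp; grind) h23.symm (by grind [h.adj₂])
  have h₃ := connected_induce_diff_singleton h₂ le_rfl (c := a₄) (y := a₃)
    (by simp; grind) h34.symm (by grind [h.adj₃])
  rwa [show ({a₀, a₁, a₂, a₃} : Set V)ᶜ = (({a₀}ᶜ \ {a₁}) \ {a₂}) \ {a₃} by ext; simp; tauto]

section Delete

variable [Fintype V] [DecidableEq V] (h : BarePath G a₀ a₁ a₂ a₃ a₄) (hcard : 5 < Fintype.card V)
include h hcard

lemma twoConnected_induce_compl_singleton
    (hA : ∀ w, w ≠ a₀ → w ≠ a₁ → w ≠ a₂ → w ≠ a₃ → G.Adj a₀ w) {o : V}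
    (ho : o ∉ [a₀, a₁, a₂, a₃, a₄])
    (hKo : (G.induce (({a₀, a₁, a₂, a₃} : Set V)ᶜ \ {o})).Connected) :
    TwoConnected (G.induce {o}ᶜ) := by
  obtain ⟨h01, h02, h03, h04, h12, h13, h14, h23, h24, h34⟩ := h.ne
  simp only [List.mem_cons, List.not_mem_nil, or_false, not_or] at ho
  obtain ⟨ho₀, ho₁, ho₂, ho₃, ho₄⟩ := ho
  have e₁₀ : G.Adj a₁ a₀ := (h.adj₁ a₀).2 (Or.inl rfl)
  have e₂₁ : G.Adj a₂ a₁ := (h.adj₂ a₁).2 (Or.inl rfl)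
  have e₃₂ : G.Adj a₃ a₂ := (h.adj₃ a₂).2 (Or.inl rfl)
  have e₃₄ : G.Adj a₃ a₄ := (h.adj₃ a₄).2 (Or.inr rfl)
  have e₄₀ : G.Adj a₄ a₀ := (hA a₄ h04.symm h14.symm h24.symm h34.symm).symm
  refine twoConnected_induce_of_connected_diff (two_lt_ncard_compl_singleton (by omega) _)
    fun x hx => ?_
  have hxo : x ≠ o := hx
  by_cases hx₀ : x = a₀
  · subst hx₀
    let p : G.Walk a₁ a₄ := .cons e₂₁.symm (.cons e₃₂.symm (.cons e₃₄ .nil))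
    have := induce_union_connected hKo.preconnected p.connected_induce_support.preconnected
      ⟨a₄, by simp; grind, by simp [p]⟩
    rwa [show ({x, a₁, a₂, a₃} : Set V)ᶜ \ {o} ∪ {w | w ∈ p.support} = {o}ᶜ \ {x} by
      ext; simp [p]; grind] at this
  refine connected_induce_of_forall_walk (r := a₀) (by simp; grind) fun v hv hv₀ => ?_
  simp only [Set.mem_sdiff, Set.mem_compl_iff, Set.mem_singleton_iff] at hv
  by_cases hv₁ : v = a₁
  · subst hv₁
    exact ⟨.cons e₁₀ .nil, by simp; grind⟩
  by_cases hv₂ : v = a₂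
  · subst hv₂
    by_cases hx₁ : x = a₁
    · exact ⟨.cons e₃₂.symm (.cons e₃₄ (.cons e₄₀ .nil)), by simp; grind⟩
    · exact ⟨.cons e₂₁ (.cons e₁₀ .nil), by simp; grind⟩
  by_cases hv₃ : v = a₃
  · subst hv₃
    by_cases hx₄ : x = a₄
    · exact ⟨.cons e₃₂ (.cons e₂₁ (.cons e₁₀ .nil)), by simp; grind⟩
    · exact ⟨.cons e₃₄ (.cons e₄₀ .nil), by simp; grind⟩
  exact ⟨.cons (hA v hv₀ hv₁ hv₂ hv₃).symm .nil, by simp; grind⟩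

lemma twoConnected_compl_induce_compl_singleton {o : V} (ho : o ∉ [a₀, a₁, a₂, a₃, a₄]) :
    TwoConnected (Gᶜ.induce {o}ᶜ) := by
  obtain ⟨h01, h02, h03, h04, h12, h13, h14, h23, h24, h34⟩ := h.ne
  simp only [List.mem_cons, List.not_mem_nil, or_false, not_or] at ho
  obtain ⟨ho₀, ho₁, ho₂, ho₃, ho₄⟩ := ho
  have c₁ : ∀ w, w ≠ a₀ → w ≠ a₁ → w ≠ a₂ → Gᶜ.Adj w a₁ := by
    grind [compl_adj, h.adj₁, G.adj_comm]
  have c₂ : ∀ w, w ≠ a₁ → w ≠ a₂ → w ≠ a₃ → Gᶜ.Adj w a₂ := by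
    grind [compl_adj, h.adj₂, G.adj_comm]
  have c₃ : ∀ w, w ≠ a₂ → w ≠ a₃ → w ≠ a₄ → Gᶜ.Adj w a₃ := by
    grind [compl_adj, h.adj₃, G.adj_comm]
  refine twoConnected_induce_of_connected_diff (two_lt_ncard_compl_singleton (by omega) _)
    fun x hx => ?_
  have hxo : x ≠ o := hx
  by_cases hx₂ : x = a₂
  · subst hx₂
    refine connected_induce_of_forall_walk (r := a₃) (by simp; grind) fun v hv hv₃ => ?_
    simp only [Set.mem_sdiff, Set.mem_compl_iff, Set.mem_singleton_iff] at hv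
    by_cases hv₄ : v = a₄
    · subst hv₄
      exact ⟨.cons (c₁ v h04.symm h14.symm h24.symm) (.cons (c₃ a₁ h12 h13 h14) .nil),
        by simp; grind⟩
    exact ⟨.cons (c₃ v hv.2 hv₃ hv₄) .nil, by simp; grind⟩
  refine connected_induce_of_forall_walk (r := a₂) (by simp; grind) fun v hv hv₂ => ?_
  simp only [Set.mem_sdiff, Set.mem_compl_iff, Set.mem_singleton_iff] at hv
  have c₀₂ := c₂ a₀ h01 h02 h03
  have c₀₃ := c₃ a₀ h02 h03 h04
  have c₁₃ := c₃ a₁ h12 h13 h14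
  have c₄₁ := c₁ a₄ h04.symm h14.symm h24.symm
  have c₄₂ := c₂ a₄ h14.symm h24.symm h34.symm
  by_cases hv₁ : v = a₁
  · subst hv₁
    by_cases hx₄ : x = a₄
    · exact ⟨.cons c₁₃ (.cons c₀₃.symm (.cons c₀₂ .nil)), by simp; grind⟩
    · exact ⟨.cons c₄₁.symm (.cons c₄₂ .nil), by simp; grind⟩
  by_cases hv₃ : v = a₃
  · subst hv₃
    by_cases hx₀ : x = a₀
    · exact ⟨.cons c₁₃.symm (.cons c₄₁.symm (.cons c₄₂ .nil)), by simp; grind⟩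
    · exact ⟨.cons c₀₃.symm (.cons c₀₂ .nil), by simp; grind⟩
  exact ⟨.cons (c₂ v hv₁ hv₂ hv₃) .nil, by simp; grind⟩

lemma exists_twoConnected_induce_compl_singleton (hG : TwoConnected G)
    (hA : ∀ w, w ≠ a₀ → w ≠ a₁ → w ≠ a₂ → w ≠ a₃ → G.Adj a₀ w) :
    ∃ o, TwoConnected (G.induce {o}ᶜ) ∧ TwoConnected (G.induce {o}ᶜ)ᶜ := by
  obtain ⟨m, hm⟩ := exists_notMem_of_length_lt_card [a₀, a₁, a₂, a₃, a₄] (by simpa using hcard)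
  simp only [List.mem_cons, List.not_mem_nil, or_false, not_or] at hm
  obtain ⟨hm₀, hm₁, hm₂, hm₃, hm₄⟩ := hm
  obtain ⟨h01, h02, h03, h04, h12, h13, h14, h23, h24, h34⟩ := h.ne
  obtain ⟨o, hoK, ho₄, hKo⟩ := exists_ne_connected_induce_diff_singleton (Set.toFinite _)
    (h.connected_induce_compl hG) (r := a₄) (x := m) (by simp; grind) (by simp; grind) hm₄
  have ho : o ∉ [a₀, a₁, a₂, a₃, a₄] := by simp at hoK ⊢; grind
  refine ⟨o, h.twoConnected_induce_compl_singleton hcard hA ho hKo, ?_⟩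
  rw [compl_induce]
  exact h.twoConnected_compl_induce_compl_singleton hcard ho

end Delete

lemma compl_suppress_adj₁ (h : BarePath G a₀ a₁ a₂ a₃ a₄) {w : V} (h₀ : w ≠ a₀) (h₁ : w ≠ a₁)
    (h₂ : w ≠ a₂) (h₃ : w ≠ a₃) : (G ⊔ edge a₁ a₃)ᶜ.Adj w a₁ := by
  grind [compl_sup_edge_adj, h.adj₁, G.adj_comm]

lemma compl_suppress_adj₃ (h : BarePath G a₀ a₁ a₂ a₃ a₄) {w : V} (h₁ : w ≠ a₁) (h₂ : w ≠ a₂)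
    (h₃ : w ≠ a₃) (h₄ : w ≠ a₄) : (G ⊔ edge a₁ a₃)ᶜ.Adj w a₃ := by
  grind [compl_sup_edge_adj, h.adj₃, G.adj_comm]

section Suppress

variable [Fintype V] [DecidableEq V] (h : BarePath G a₀ a₁ a₂ a₃ a₄) (hG : TwoConnected G)
  (hcard : 5 < Fintype.card V)
include h hG hcard

lemma exists_walk_compl_suppress {w₀ x : V} (hw₀ : w₀ ≠ a₀) (hw₀₁ : w₀ ≠ a₁) (hw₀₂ : w₀ ≠ a₂)
    (hw₀₃ : w₀ ≠ a₃) (hnadj : ¬ G.Adj a₀ w₀) (hx₁ : x ≠ a₁) (hx₃ : x ≠ a₃) :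
    ∃ p : (G ⊔ edge a₁ a₃)ᶜ.Walk a₃ a₁, ∀ w ∈ p.support, w ∈ ({a₂}ᶜ \ {x} : Set V) := by
  obtain ⟨h01, h02, h03, h04, h12, h13, h14, h23, h24, h34⟩ := h.ne
  by_cases hx : x = a₀ ∨ x = a₄
  · obtain ⟨m, hm⟩ := exists_notMem_of_length_lt_card [a₀, a₁, a₂, a₃, a₄] (by simpa using hcard)
    simp only [List.mem_cons, List.not_mem_nil, or_false, not_or] at hm
    obtain ⟨hm₀, hm₁, hm₂, hm₃, hm₄⟩ := hm
    exact ⟨.cons (h.compl_suppress_adj₃ hm₁ hm₂ hm₃ hm₄).symm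
      (.cons (h.compl_suppress_adj₁ hm₀ hm₁ hm₂ hm₃) .nil), by simp; grind⟩
  simp only [not_or] at hx
  by_cases hw₀x : w₀ = x
  · -- `x` is not adjacent to `a₀`, so 2-connectivity gives it a neighbour off the path
    subst hw₀x
    obtain ⟨y, hy₄, hy⟩ := hG.exists_adj_ne hx.2
    have hy₀ : y ≠ a₀ := fun h' => hnadj (h' ▸ hy.symm)
    have hy₁ : y ≠ a₁ := by grind [h.adj₁, G.adj_comm]
    have hy₂ : y ≠ a₂ := by grind [h.adj₂, G.adj_comm]
    have hy₃ : y ≠ a₃ := by grind [h.adj₃, G.adj_comm]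
    exact ⟨.cons (h.compl_suppress_adj₃ hy₁ hy₂ hy₃ hy₄).symm
      (.cons (h.compl_suppress_adj₁ hy₀ hy₁ hy₂ hy₃) .nil), by simp; grind [hy.ne]⟩
  · have c₀ : (G ⊔ edge a₁ a₃)ᶜ.Adj a₀ w₀ := by grind [compl_sup_edge_adj]
    exact ⟨.cons (h.compl_suppress_adj₃ h01 h02 h03 h04).symm
      (.cons c₀ (.cons (h.compl_suppress_adj₁ hw₀ hw₀₁ hw₀₂ hw₀₃) .nil)), by simp; grind⟩

lemma connected_compl_suppress_diff {w₀ x : V} (hw₀ : w₀ ≠ a₀) (hw₀₁ : w₀ ≠ a₁)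
    (hw₀₂ : w₀ ≠ a₂) (hw₀₃ : w₀ ≠ a₃) (hnadj : ¬ G.Adj a₀ w₀) (hx₁ : x ≠ a₁) :
    ((G ⊔ edge a₁ a₃)ᶜ.induce ({a₂}ᶜ \ {x})).Connected := by
  obtain ⟨h01, h02, h03, h04, h12, h13, h14, h23, h24, h34⟩ := h.ne
  have c₀ : (G ⊔ edge a₁ a₃)ᶜ.Adj a₀ w₀ := by grind [compl_sup_edge_adj]
  refine connected_induce_of_forall_walk (r := a₁) (by simp; grind) fun v hv hv₁ => ?_
  simp only [Set.mem_sdiff, Set.mem_compl_iff, Set.mem_singleton_iff] at hv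
  by_cases hv₀ : v = a₀
  · subst hv₀
    by_cases hw₀x : w₀ = x
    · obtain ⟨p, hp⟩ :=
        h.exists_walk_compl_suppress hG hcard hw₀ hw₀₁ hw₀₂ hw₀₃ hnadj hx₁ (hw₀x ▸ hw₀₃)
      refine ⟨.cons (h.compl_suppress_adj₃ h01 h02 h03 h04) p, ?_⟩
      simp only [Walk.support_cons, List.forall_mem_cons]
      exact ⟨by simp; grind, hp⟩
    · exact ⟨.cons c₀ (.cons (h.compl_suppress_adj₁ hw₀ hw₀₁ hw₀₂ hw₀₃) .nil), by simp; grind⟩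
  by_cases hv₃ : v = a₃
  · subst hv₃
    exact h.exists_walk_compl_suppress hG hcard hw₀ hw₀₁ hw₀₂ hw₀₃ hnadj hx₁ (Ne.symm hv.2)
  exact ⟨.cons (h.compl_suppress_adj₁ hv₀ hv₁ hv.1 hv₃) .nil, by simp; grind⟩

lemma twoConnected_compl_suppress
    (hw₀ : ∃ w, w ≠ a₀ ∧ w ≠ a₁ ∧ w ≠ a₂ ∧ w ≠ a₃ ∧ ¬ G.Adj a₀ w)
    (hw₄ : ∃ w, w ≠ a₄ ∧ w ≠ a₃ ∧ w ≠ a₂ ∧ w ≠ a₁ ∧ ¬ G.Adj a₄ w) :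
    TwoConnected ((G ⊔ edge a₁ a₃).induce {a₂}ᶜ)ᶜ := by
  obtain ⟨h01, h02, h03, h04, h12, h13, h14, h23, h24, h34⟩ := h.ne
  obtain ⟨w₀, hw₀₀, hw₀₁, hw₀₂, hw₀₃, hw₀⟩ := hw₀
  obtain ⟨w₄, hw₄₄, hw₄₃, hw₄₂, hw₄₁, hw₄⟩ := hw₄
  rw [compl_induce]
  refine twoConnected_induce_of_connected_diff (two_lt_ncard_compl_singleton (by omega) _)
    fun x _ => ?_
  by_cases hx₁ : x = a₁
  · subst hx₁
    have c₄ : (G ⊔ edge x a₃)ᶜ.Adj a₄ w₄ := by grind [compl_sup_edge_adj]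
    refine connected_induce_of_forall_walk (r := a₃) (by simp; grind) fun v hv hv₃ => ?_
    simp only [Set.mem_sdiff, Set.mem_compl_iff, Set.mem_singleton_iff] at hv
    by_cases hv₄ : v = a₄
    · subst hv₄
      exact ⟨.cons c₄ (.cons (h.compl_suppress_adj₃ hw₄₁ hw₄₂ hw₄₃ hw₄₄) .nil), by simp; grind⟩
    exact ⟨.cons (h.compl_suppress_adj₃ hv.2 hv.1 hv₃ hv₄) .nil, by simp; grind⟩
  exact h.connected_compl_suppress_diff hG hcard hw₀₀ hw₀₁ hw₀₂ hw₀₃ hw₀ hx₁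

end Suppress

lemma iso_cycleGraph [Fintype V] (h : BarePath G a₀ a₁ a₂ a₃ a₄) (hG : TwoConnected G)
    (hcard : Fintype.card V = 5) : Nonempty (G ≃g cycleGraph 5) := by
  obtain ⟨h01, h02, h03, h04, h12, h13, h14, h23, h24, h34⟩ := h.ne
  set a : Fin 5 → V := ![a₀, a₁, a₂, a₃, a₄]
  have ha : a.Injective := by
    intro i j hij
    fin_cases i <;> fin_cases j <;> simp_all [a]
  have hbij : a.Bijective := (Fintype.bijective_iff_injective_and_card a).2 ⟨ha, by simp [hcard]⟩
  have hall : ∀ w, w = a₀ ∨ w = a₁ ∨ w = a₂ ∨ w = a₃ ∨ w = a₄ := fun w => by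
    obtain ⟨i, rfl⟩ := hbij.2 w
    fin_cases i <;> simp [a]
  have e₀₄ : G.Adj a₀ a₄ := by
    obtain ⟨y, hy₁, hy⟩ := hG.exists_adj_ne h01
    rcases hall y with rfl | rfl | rfl | rfl | rfl
    · exact absurd hy (G.irrefl)
    · exact absurd rfl hy₁
    · grind [h.adj₂, G.adj_comm]
    · grind [h.adj₃, G.adj_comm]
    · exact hy
  refine ⟨(⟨Equiv.ofBijective a hbij, fun {i j} => ?_⟩ : cycleGraph 5 ≃g G).symm⟩
  fin_cases i <;> fin_cases j <;> simp [a, cycleGraph_adj] <;>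
    grind [h.adj₁, h.adj₂, h.adj₃, G.adj_comm]

lemma of_isPath [Fintype V] [DecidableRel G.Adj] {u v : V} {p : G.Walk u v} (hp : p.IsPath)
    (hlen : 3 < p.length) (hdeg : ∀ x ∈ p.support, x ≠ u → x ≠ v → G.degree x = 2) :
    BarePath G (p.getVert 0) (p.getVert 1) (p.getVert 2) (p.getVert 3) (p.getVert 4) := by
  have hne : ∀ i j, i ≤ p.length → j ≤ p.length → i ≠ j → p.getVert i ≠ p.getVert j :=
    fun i j hi hj hij e => hij (hp.getVert_injOn hi hj e)
  have hadj : ∀ i, 0 < i → i < p.length →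
      ∀ w, G.Adj (p.getVert i) w ↔ w = p.getVert (i - 1) ∨ w = p.getVert (i + 1) := by
    intro i hi₀ hi
    have hdeg₂ := hdeg _ (p.getVert_mem_support i)
      (by simpa using hne i 0 hi.le (by omega) (by omega))
      (by simpa using hne i p.length hi.le le_rfl (by omega))
    refine adj_iff_of_degree_eq_two hdeg₂ ?_ (p.adj_getVert_succ hi)
      (hne _ _ (by omega) (by omega) (by omega))
    simpa [Nat.sub_add_cancel hi₀] using (p.adj_getVert_succ (i := i - 1) (by omega)).symm
  refine ⟨?_, hadj 1 (by omega) (by omega), hadj 2 (by omega) (by omega),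
    hadj 3 (by omega) (by omega)⟩
  simp only [List.nodup_cons, List.mem_cons, List.not_mem_nil, or_false, not_or,
    List.nodup_nil, and_true, not_false_eq_true]
  refine ⟨⟨?_, ?_, ?_, ?_⟩, ⟨?_, ?_, ?_⟩, ⟨?_, ?_⟩, ?_⟩ <;> apply hne <;> omega

lemma card_le_five [Fintype V] [DecidableEq V]
    (hG : IsIMMNon2Cograph G) (h : BarePath G a₀ a₁ a₂ a₃ a₄) : Fintype.card V ≤ 5 := by
  by_contra! hcard
  have hG₂ := hG.twoConnected
  have hmin : ∀ (W : Type) [Fintype W] (H : SimpleGraph W), IsInducedMinor G H →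
      Fintype.card W < Fintype.card V → ¬ (TwoConnected H ∧ TwoConnected Hᶜ) :=
    fun W _ H hH hW => (hG.2 W H hH hW).not_twoConnected_and_compl
  have exists_nonadj : ∀ {b₀ b₁ b₂ b₃ b₄ : V}, BarePath G b₀ b₁ b₂ b₃ b₄ →
      ∃ w, w ≠ b₀ ∧ w ≠ b₁ ∧ w ≠ b₂ ∧ w ≠ b₃ ∧ ¬ G.Adj b₀ w := by
    intro b₀ b₁ b₂ b₃ b₄ hb
    by_contra! hA
    obtain ⟨o, ho⟩ := hb.exists_twoConnected_induce_compl_singleton hcard hG₂ hA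
    exact hmin _ _ (isInducedMinor_induce G _) (Fintype.card_subtype_lt (x := o) (by simp)) ho
  obtain ⟨-, -, -, -, -, h₁₃, -⟩ := h.ne
  exact hmin _ _ (isInducedMinor_suppress h₁₃ h.adj₂) (Fintype.card_subtype_lt (x := a₂) (by simp))
    ⟨hG₂.suppress h₁₃ h.adj₂ (by omega),
      h.twoConnected_compl_suppress hG₂ hcard (exists_nonadj h) (exists_nonadj h.symm)⟩

end BarePath

end BarePaths

theorem path_C5_general {V : Type} [Fintype V]
    (G : SimpleGraph V) [DecidableRel G.Adj]
    (hG : IsIMMNon2Cograph G)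
    (u v : V) (p : G.Walk u v) (hp : p.IsPath) (hlen : 3 < p.length)
    (hdeg : ∀ x ∈ p.support, x ≠ u → x ≠ v → G.degree x = 2) :
    Nonempty (G ≃g SimpleGraph.cycleGraph 5) := by
  classical
  have h := BarePath.of_isPath hp hlen hdeg
  have hle := h.card_le_five hG
  have hlt := hp.length_lt
  exact h.iso_cycleGraph hG.twoConnected (by omega)

theorem path_C5 {V : Type} [Fintype V] [DecidableEq V]
    (G : SimpleGraph V) [DecidableRel G.Adj]
    (hG : IsIMMNon2Cograph G) (hGc : IsIMMNon2Cograph Gᶜ)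
    (u v : V) (p : G.Walk u v) (hp : p.IsPath) (hlen : 3 < p.length)
    (hdeg : ∀ x ∈ p.support, x ≠ u → x ≠ v → G.degree x = 2) :
    Nonempty (G ≃g SimpleGraph.cycleGraph 5) :=
  path_C5_general G hG u v p hp hlen hdeg
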